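/- arXiv:2501.14668 — 2 statements merged into one kernel-verified Lean document; each statement's English description precedes it below -/
import Mathlib

section
/- Let p and q be relatively prime positive integers with weight sequence W(p,q) = (m_1, …, m_k). Then the sum of the squares of the weights equals the product: ∑_{i=1}^{k} m_i^2 = p·q. -/
/-- Let `p, q` be relatively prime positive integers with weight sequence
`W(p,q) = (m₁, …, m_k)`, where `(p₁, q₁) = (p, q)`, `(pₙ₊₁, qₙ₊₁) = (|pₙ − qₙ|, min pₙ qₙ)`
whenever `pₙ ≠ qₙ`, `k` is the least index with `(p_k, q_k) = (1,1)`, and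
`mᵢ = min pᵢ qᵢ`.  Then `∑_{i=1}^{k} mᵢ² = p·q`. -/
theorem weight_sequence_sum_sq
    (p q : ℕ) (hp : 0 < p) (hq : 0 < q) (hpq : Nat.gcd p q = 1)
    (f : ℕ → ℕ × ℕ) (k : ℕ) (hk : 1 ≤ k) (hf1 : f 1 = (p, q))
    (hne : ∀ n, 1 ≤ n → n < k → (f n).1 ≠ (f n).2)
    (hstep : ∀ n, 1 ≤ n → n < k →
      f (n + 1) = (max (f n).1 (f n).2 - min (f n).1 (f n).2, min (f n).1 (f n).2))
    (hfk : f k = (1, 1)) :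
    ∑ i ∈ Finset.Icc 1 k, (min (f i).1 (f i).2) ^ 2 = p * q := by
  have key : ∀ d n, n + d = k → 1 ≤ n →
      ∑ i ∈ Finset.Icc n k, (min (f i).1 (f i).2) ^ 2 = (f n).1 * (f n).2 := by
    intro d
    induction d with
    | zero =>
      intro n h h1
      subst h
      have hfn : f n = (1, 1) := by simpa using hfk
      simp [hfn]
    | succ d ih =>
      intro n h h1
      have hnk : n < k := by omega
      have hins : Finset.Icc n k = insert n (Finset.Icc (n+1) k) := by
        ext x; simp [Finset.mem_Icc, Finset.mem_insert]; omega
      rw [hins, Finset.sum_insert (by simp), ih (n+1) (by omega) (by omega)]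
      rw [hstep n h1 hnk]
      set m := min (f n).1 (f n).2 with hm
      set M := max (f n).1 (f n).2 with hM
      have hmM : m ≤ M := min_le_max
      have : m ^ 2 + (M - m) * m = M * m := by
        have h2 : m ^ 2 = m * m := sq m
        have h3 : m * m ≤ M * m := Nat.mul_le_mul_right m hmM
        rw [h2, Nat.sub_mul]
        omega
      rw [this, hm, hM]
      rcases le_total (f n).1 (f n).2 with h | h <;>
        simp [max_eq_right, max_eq_left, min_eq_left, min_eq_right, h, Nat.mul_comm]
  have := key (k - 1) 1 (by omega) le_rfl
  rw [this, hf1]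
end

section
/- Let p and q be relatively prime positive integers with weight sequence W(p,q) = (m_1, …, m_k). Let L = ℤ^{k+2} with basis (α, κ, e_1, …, e_k), and let B be the symmetric bilinear form on L determined by B(α, α) = p·q, B(α, κ) = B(κ, α) = −p − q − 1, B(κ, κ) = d for an arbitrary fixed integer d, B(e_i, e_i) = −1 for 1 ≤ i ≤ k, and B = 0 on all other pairs of distinct basis vectors. Set Ã := α − ∑_{i=1}^{k} m_i·e_i and κ̃ := κ + ∑_{i=1}^{k} e_i. Then B(Ã, Ã) = 0 and B(Ã, κ̃) = −2; in particular the Seiberg–Witten index I(Ã) := B(Ã, Ã) − B(κ̃, Ã) equals 2. (This is the computation showing that the normal crossing resolution class of a (p,q)-unicuspidal rational curve of class A with A^2 = pq and A·K_ω = −p−q−1 satisfies Ã^2 = 0, Ã·K̃ = −2 and I(Ã) = 2 in the blowup.) -/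
lemma sum_Icc_shift (k : ℕ) (g : ℕ → ℤ) :
    ∑ i ∈ Finset.Icc 1 (k+1), g i = g 1 + ∑ i ∈ Finset.Icc 1 k, g (i + 1) := by
  induction k with
  | zero => simp
  | succ n ihn =>
    rw [Finset.sum_Icc_succ_top (by omega) g, ihn,
      Finset.sum_Icc_succ_top (by omega) (fun i => g (i+1))]
    ring

lemma weight_sums (k : ℕ) (hk : 1 ≤ k) : ∀ f : ℕ → ℕ × ℕ,
    (∀ n, 1 ≤ n → n < k →
      f (n + 1) = (max (f n).1 (f n).2 - min (f n).1 (f n).2, min (f n).1 (f n).2)) →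
    f k = (1, 1) →
    (∑ i ∈ Finset.Icc 1 k, ((min (f i).1 (f i).2 : ℕ) : ℤ)^2 = (f 1).1 * (f 1).2) ∧
    (∑ i ∈ Finset.Icc 1 k, ((min (f i).1 (f i).2 : ℕ) : ℤ) = (f 1).1 + (f 1).2 - 1) := by
  induction k, hk using Nat.le_induction with
  | base =>
    intro f _ hfk
    simp [hfk]
  | succ k hk ih =>
    intro f hstep hfk
    have hstep' : ∀ n, 1 ≤ n → n < k →
        f (n + 1 + 1) = (max (f (n+1)).1 (f (n+1)).2 - min (f (n+1)).1 (f (n+1)).2,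
          min (f (n+1)).1 (f (n+1)).2) := by
      intro n h1 h2; exact hstep (n+1) (by omega) (by omega)
    obtain ⟨ih1, ih2⟩ := ih (fun n => f (n + 1)) hstep' hfk
    have hf2 := hstep 1 le_rfl (by omega)
    rw [sum_Icc_shift, sum_Icc_shift]
    set a := (f 1).1 with ha
    set b := (f 1).2 with hb
    have hmin : min a b ≤ max a b := min_le_max
    have hcast : ((max a b - min a b : ℕ) : ℤ) = ((max a b : ℕ) : ℤ) - ((min a b : ℕ) : ℤ) :=
      Nat.cast_sub hmin
    have h2 : (f 2).1 = max a b - min a b := by rw [hf2]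
    have h2' : (f 2).2 = min a b := by rw [hf2]
    have hminmax : ((min a b : ℕ) : ℤ) * ((max a b : ℕ) : ℤ) = (a : ℤ) * b := by
      rcases le_total a b with h | h <;>
        simp [min_eq_left h, max_eq_right h, min_eq_right h, max_eq_left h] <;> ring
    have hmaxmin : ((max a b : ℕ) : ℤ) + ((min a b : ℕ) : ℤ) = (a : ℤ) + b := by
      rcases le_total a b with h | h <;>
        simp [min_eq_left h, max_eq_right h, min_eq_right h, max_eq_left h] <;> ring
    constructor
    · rw [ih1, h2, h2', hcast]
      nlinarith [hminmax]
    · rw [ih2, h2, h2', hcast]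
      linarith [hmaxmin]

/-- Let `p, q` be relatively prime positive integers with weight sequence
`W(p,q) = (m₁, …, m_k)`.  On the lattice `L` spanned by `α, κ, e₁, …, e_k` with symmetric
bilinear form `B` satisfying `B(α,α) = pq`, `B(α,κ) = B(κ,α) = −p−q−1`, `B(κ,κ) = d`,
`B(eᵢ,eᵢ) = −1`, and `B = 0` on all other pairs of distinct basis vectors, set
`Atil = α − ∑ mᵢ·eᵢ` and `Ktil = κ + ∑ eᵢ`.  Then `B(Atil,Atil) = 0`, `B(Atil,Ktil) = −2`, and the
Seiberg–Witten index `I(Atil) = B(Atil,Atil) − B(Ktil,Atil)` equals `2`. -/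
theorem resolution_class_index
    (p q : ℕ) (hp : 0 < p) (hq : 0 < q) (hpq : Nat.gcd p q = 1)
    (f : ℕ → ℕ × ℕ) (k : ℕ) (hk : 1 ≤ k) (hf1 : f 1 = (p, q))
    (hne : ∀ n, 1 ≤ n → n < k → (f n).1 ≠ (f n).2)
    (hstep : ∀ n, 1 ≤ n → n < k →
      f (n + 1) = (max (f n).1 (f n).2 - min (f n).1 (f n).2, min (f n).1 (f n).2))
    (hfk : f k = (1, 1))
    (m : ℕ → ℕ) (hm : ∀ i, 1 ≤ i → i ≤ k → m i = min (f i).1 (f i).2)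
    (L : Type*) [AddCommGroup L] [Module ℤ L]
    (B : L →ₗ[ℤ] L →ₗ[ℤ] ℤ) (α κ : L) (e : ℕ → L) (d : ℤ)
    (hαα : B α α = (p : ℤ) * q)
    (hακ : B α κ = -(p : ℤ) - q - 1) (hκα : B κ α = -(p : ℤ) - q - 1)
    (hκκ : B κ κ = d)
    (hee : ∀ i, 1 ≤ i → i ≤ k → B (e i) (e i) = -1)
    (hαe : ∀ i, 1 ≤ i → i ≤ k → B α (e i) = 0 ∧ B (e i) α = 0)
    (hκe : ∀ i, 1 ≤ i → i ≤ k → B κ (e i) = 0 ∧ B (e i) κ = 0)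
    (heij : ∀ i j, 1 ≤ i → i ≤ k → 1 ≤ j → j ≤ k → i ≠ j → B (e i) (e j) = 0)
    (Atil Ktil : L)
    (hAtil : Atil = α - ∑ i ∈ Finset.Icc 1 k, (m i : ℤ) • e i)
    (hKtil : Ktil = κ + ∑ i ∈ Finset.Icc 1 k, e i) :
    B Atil Atil = 0 ∧ B Atil Ktil = -2 ∧ B Atil Atil - B Ktil Atil = 2 := by
  obtain ⟨ksq, ksum⟩ := weight_sums k hk f hstep hfk
  rw [hf1] at ksq ksum
  have hmsq : ∑ i ∈ Finset.Icc 1 k, (m i : ℤ)^2 = (p : ℤ) * q := by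
    rw [← ksq]
    refine Finset.sum_congr rfl fun i hi => ?_
    obtain ⟨h1, h2⟩ := Finset.mem_Icc.mp hi
    rw [hm i h1 h2]
  have hmsum : ∑ i ∈ Finset.Icc 1 k, (m i : ℤ) = (p : ℤ) + q - 1 := by
    rw [← ksum]
    refine Finset.sum_congr rfl fun i hi => ?_
    obtain ⟨h1, h2⟩ := Finset.mem_Icc.mp hi
    rw [hm i h1 h2]
  set S := ∑ i ∈ Finset.Icc 1 k, (m i : ℤ) • e i with hS
  set T := ∑ i ∈ Finset.Icc 1 k, e i with hT
  have hBeS : ∀ i, 1 ≤ i → i ≤ k → B (e i) S = -(m i : ℤ) := by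
    intro i h1 h2
    rw [hS, map_sum]
    rw [Finset.sum_eq_single_of_mem i (Finset.mem_Icc.mpr ⟨h1, h2⟩)]
    · simp [hee i h1 h2]
    · intro j hj hji
      obtain ⟨hj1, hj2⟩ := Finset.mem_Icc.mp hj
      simp [heij i j h1 h2 hj1 hj2 (Ne.symm hji)]
  have hBeT : ∀ i, 1 ≤ i → i ≤ k → B (e i) T = -1 := by
    intro i h1 h2
    rw [hT, map_sum]
    rw [Finset.sum_eq_single_of_mem i (Finset.mem_Icc.mpr ⟨h1, h2⟩)]
    · exact hee i h1 h2
    · intro j hj hji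
      obtain ⟨hj1, hj2⟩ := Finset.mem_Icc.mp hj
      exact heij i j h1 h2 hj1 hj2 (Ne.symm hji)
  have hBαS : B α S = 0 := by
    rw [hS, map_sum]
    refine Finset.sum_eq_zero fun i hi => ?_
    obtain ⟨h1, h2⟩ := Finset.mem_Icc.mp hi
    simp [(hαe i h1 h2).1]
  have hBαT : B α T = 0 := by
    rw [hT, map_sum]
    refine Finset.sum_eq_zero fun i hi => ?_
    obtain ⟨h1, h2⟩ := Finset.mem_Icc.mp hi
    exact (hαe i h1 h2).1
  have hBκS : B κ S = 0 := by
    rw [hS, map_sum]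
    refine Finset.sum_eq_zero fun i hi => ?_
    obtain ⟨h1, h2⟩ := Finset.mem_Icc.mp hi
    simp [(hκe i h1 h2).1]
  have hSapp : ∀ x : L, B S x = ∑ i ∈ Finset.Icc 1 k, (m i : ℤ) * B (e i) x := by
    intro x
    rw [hS, map_sum, LinearMap.sum_apply]
    refine Finset.sum_congr rfl fun i hi => ?_
    simp
  have hTapp : ∀ x : L, B T x = ∑ i ∈ Finset.Icc 1 k, B (e i) x := by
    intro x
    rw [hT, map_sum, LinearMap.sum_apply]
  have hBSα : B S α = 0 := by
    rw [hSapp]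
    refine Finset.sum_eq_zero fun i hi => ?_
    obtain ⟨h1, h2⟩ := Finset.mem_Icc.mp hi
    rw [(hαe i h1 h2).2, mul_zero]
  have hBSκ : B S κ = 0 := by
    rw [hSapp]
    refine Finset.sum_eq_zero fun i hi => ?_
    obtain ⟨h1, h2⟩ := Finset.mem_Icc.mp hi
    rw [(hκe i h1 h2).2, mul_zero]
  have hBTα : B T α = 0 := by
    rw [hTapp]
    refine Finset.sum_eq_zero fun i hi => ?_
    obtain ⟨h1, h2⟩ := Finset.mem_Icc.mp hi
    exact (hαe i h1 h2).2
  have hBSS : B S S = -((p : ℤ) * q) := by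
    rw [hSapp, ← hmsq]
    rw [← Finset.sum_neg_distrib]
    refine Finset.sum_congr rfl fun i hi => ?_
    obtain ⟨h1, h2⟩ := Finset.mem_Icc.mp hi
    rw [hBeS i h1 h2]; ring
  have hBST : B S T = -((p : ℤ) + q - 1) := by
    rw [hSapp, ← hmsum]
    rw [← Finset.sum_neg_distrib]
    refine Finset.sum_congr rfl fun i hi => ?_
    obtain ⟨h1, h2⟩ := Finset.mem_Icc.mp hi
    rw [hBeT i h1 h2]; ring
  have hBTS : B T S = -((p : ℤ) + q - 1) := by
    rw [hTapp, ← hmsum]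
    rw [← Finset.sum_neg_distrib]
    refine Finset.sum_congr rfl fun i hi => ?_
    obtain ⟨h1, h2⟩ := Finset.mem_Icc.mp hi
    rw [hBeS i h1 h2]
  have hA : B Atil Atil = 0 := by
    rw [hAtil]
    simp only [map_sub, LinearMap.sub_apply, hαα, hBαS, hBSα, hBSS]
    ring
  have hAK : B Atil Ktil = -2 := by
    rw [hAtil, hKtil]
    simp only [map_sub, map_add, LinearMap.sub_apply, LinearMap.add_apply,
      hακ, hBαT, hBSκ, hBST]
    ring
  have hKA : B Ktil Atil = -2 := by
    rw [hAtil, hKtil]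
    simp only [map_sub, map_add, LinearMap.sub_apply, LinearMap.add_apply,
      hκα, hBκS, hBTα, hBTS]
    ring
  exact ⟨hA, hAK, by rw [hA, hKA]; ring⟩
end
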